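/- arXiv:2112.05119 — 2 statements merged into one kernel-verified Lean document; each statement's English description precedes it below -/
import Mathlib

section
/- Let V be a partial isometry on a complex Hilbert space H and 𝒱 = iXV − iVY with X, Y ∈ B(H) selfadjoint. On the Hilbert space H × H (with inner product ⟨(ξ₁,η₁),(ξ₂,η₂)⟩ = ⟨ξ₁,ξ₂⟩ + ⟨η₁,η₂⟩) define V⊕0 by (V⊕0)(ξ,η) = (Vξ, 0) and 𝒱⊕0 by (𝒱⊕0)(ξ,η) = (𝒱ξ, 0). Then V⊕0 is a partial isometry on H × H, 𝒱⊕0 is a tangent vector at V⊕0 (i.e., 𝒱⊕0 = i𝐗(V⊕0) − i(V⊕0)𝐘 for some selfadjoint 𝐗, 𝐘 on H × H), and |𝒱⊕0|_{V⊕0} = |𝒱|_V. -/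
variable {H : Type*} [NormedAddCommGroup H] [InnerProductSpace ℂ H] [CompleteSpace H]

noncomputable def finslerNorm {E : Type*} [NormedAddCommGroup E] [InnerProductSpace ℂ E]
    [CompleteSpace E] (V W : E →L[ℂ] E) : ℝ :=
  sInf { r : ℝ | ∃ A B : E →L[ℂ] E, IsSelfAdjoint A ∧ IsSelfAdjoint B ∧
    Complex.I • (A * V) - Complex.I • (V * B) = W ∧ r = max ‖A‖ ‖B‖ }

/-!
`A ↦ A ⊕ 0 = ι A π`, with `π` the first projection of `E × F` and `ι = π*` the first inclusion,
is a contractive `*`-homomorphism, so every representation `iAV − iVB` of `𝒱` yields one of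
`𝒱 ⊕ 0` at `V ⊕ 0` with no larger norms. Conversely the compression `T ↦ π T ι` is contractive,
preserves selfadjointness and satisfies `π (T (V ⊕ 0)) ι = (π T ι) V`, `π ((V ⊕ 0) T) ι = V (π T ι)`
(because `π ι = 1`), so it turns a representation of `𝒱 ⊕ 0` into one of `𝒱`.
-/

open ContinuousLinearMap

namespace WithLp

variable (𝕜 E F : Type*) [RCLike 𝕜] [NormedAddCommGroup E] [InnerProductSpace 𝕜 E]
  [NormedAddCommGroup F] [InnerProductSpace 𝕜 F]

noncomputable def inlL : E →L[𝕜] WithLp 2 (E × F) :=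
  (prodContinuousLinearEquiv 2 𝕜 E F).symm.toContinuousLinearMap ∘L inl 𝕜 E F

variable {𝕜 E F}

@[simp]
lemma inlL_apply (x : E) : inlL 𝕜 E F x = toLp 2 (x, 0) := rfl

lemma norm_fstL_le : ‖fstL 2 𝕜 E F‖ ≤ 1 :=
  opNorm_le_bound _ zero_le_one fun x => by simpa using norm_fst_le E x

lemma norm_inlL_le : ‖inlL 𝕜 E F‖ ≤ 1 :=
  opNorm_le_bound _ zero_le_one fun x => by simp

variable [CompleteSpace E] [CompleteSpace F]

lemma adjoint_fstL : adjoint (fstL 2 𝕜 E F) = inlL 𝕜 E F :=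
  ((eq_adjoint_iff _ _).2 fun x y => by simp [prod_inner_apply]).symm

lemma adjoint_inlL : adjoint (inlL 𝕜 E F) = fstL 2 𝕜 E F := by
  rw [← adjoint_fstL, adjoint_adjoint]

end WithLp

open WithLp

section Corner

variable {𝕜 E F : Type*} [RCLike 𝕜] [NormedAddCommGroup E] [InnerProductSpace 𝕜 E]
  [NormedAddCommGroup F] [InnerProductSpace 𝕜 F]

variable (F) in
noncomputable def corner : (WithLp 2 (E × F) →L[𝕜] WithLp 2 (E × F)) →ₗ[𝕜] (E →L[𝕜] E) where
  toFun T := fstL 2 𝕜 E F ∘L T ∘L inlL 𝕜 E F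
  map_add' S T := by simp only [comp_add, add_comp]
  map_smul' c T := by simp only [RingHom.id_apply, comp_smul, smul_comp]

lemma norm_corner_le (T : WithLp 2 (E × F) →L[𝕜] WithLp 2 (E × F)) : ‖corner F T‖ ≤ ‖T‖ :=
  calc ‖fstL 2 𝕜 E F ∘L T ∘L inlL 𝕜 E F‖ ≤ ‖fstL 2 𝕜 E F‖ * (‖T‖ * ‖inlL 𝕜 E F‖) :=
        (opNorm_comp_le _ _).trans (by gcongr; exact opNorm_comp_le _ _)
    _ ≤ 1 * (‖T‖ * 1) := by gcongr; exacts [norm_fstL_le, norm_inlL_le]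
    _ = ‖T‖ := by ring

variable [CompleteSpace E] [CompleteSpace F]

lemma IsSelfAdjoint.corner {T : WithLp 2 (E × F) →L[𝕜] WithLp 2 (E × F)} (hT : IsSelfAdjoint T) :
    IsSelfAdjoint (corner F T) := by
  change adjoint (fstL 2 𝕜 E F ∘L T ∘L inlL 𝕜 E F) = fstL 2 𝕜 E F ∘L T ∘L inlL 𝕜 E F
  rw [adjoint_comp, adjoint_comp, adjoint_fstL, adjoint_inlL, ← star_eq_adjoint, hT.star_eq,
    comp_assoc]

variable (F) in
noncomputable def oplusZero : (E →L[𝕜] E) →⋆ₙₐ[𝕜] (WithLp 2 (E × F) →L[𝕜] WithLp 2 (E × F)) where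
  toFun A := inlL 𝕜 E F ∘L A ∘L fstL 2 𝕜 E F
  map_smul' c A := by simp only [MonoidHom.id_apply, comp_smul, smul_comp]
  map_zero' := by simp only [zero_comp, comp_zero]
  map_add' A B := by simp only [comp_add, add_comp]
  map_mul' A B := rfl
  map_star' A := by simp only [star_eq_adjoint, adjoint_comp, adjoint_fstL, adjoint_inlL, comp_assoc]

lemma norm_oplusZero_le (A : E →L[𝕜] E) : ‖oplusZero F A‖ ≤ ‖A‖ :=
  calc ‖inlL 𝕜 E F ∘L A ∘L fstL 2 𝕜 E F‖ ≤ ‖inlL 𝕜 E F‖ * (‖A‖ * ‖fstL 2 𝕜 E F‖) :=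
        (opNorm_comp_le _ _).trans (by gcongr; exact opNorm_comp_le _ _)
    _ ≤ 1 * (‖A‖ * 1) := by gcongr; exacts [norm_inlL_le, norm_fstL_le]
    _ = ‖A‖ := by ring

lemma corner_oplusZero (A : E →L[𝕜] E) : corner F (oplusZero F A) = A := rfl

lemma corner_oplusZero_mul (A : E →L[𝕜] E) (T : WithLp 2 (E × F) →L[𝕜] WithLp 2 (E × F)) :
    corner F (oplusZero F A * T) = A * corner F T := rfl

lemma corner_mul_oplusZero (A : E →L[𝕜] E) (T : WithLp 2 (E × F) →L[𝕜] WithLp 2 (E × F)) :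
    corner F (T * oplusZero F A) = corner F T * A := rfl

end Corner

section FinslerNorm

variable {E F : Type*} [NormedAddCommGroup E] [InnerProductSpace ℂ E] [CompleteSpace E]
  [NormedAddCommGroup F] [InnerProductSpace ℂ F] [CompleteSpace F]

lemma finslerNorm_le {V W A B : E →L[ℂ] E} (hA : IsSelfAdjoint A) (hB : IsSelfAdjoint B)
    (h : Complex.I • (A * V) - Complex.I • (V * B) = W) : finslerNorm V W ≤ max ‖A‖ ‖B‖ :=
  csInf_le ⟨0, fun _ ⟨A, _, _, _, _, hr⟩ => hr ▸ le_max_of_le_left (norm_nonneg A)⟩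
    ⟨A, B, hA, hB, h, rfl⟩

lemma finslerNorm_le_finslerNorm {V W : E →L[ℂ] E} {V' W' : F →L[ℂ] F}
    (hW : ∃ A B, IsSelfAdjoint A ∧ IsSelfAdjoint B ∧ Complex.I • (A * V) - Complex.I • (V * B) = W)
    (h : ∀ A B, IsSelfAdjoint A → IsSelfAdjoint B → Complex.I • (A * V) - Complex.I • (V * B) = W →
      ∃ A' B', IsSelfAdjoint A' ∧ IsSelfAdjoint B' ∧
        Complex.I • (A' * V') - Complex.I • (V' * B') = W' ∧ ‖A'‖ ≤ ‖A‖ ∧ ‖B'‖ ≤ ‖B‖) :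
    finslerNorm V' W' ≤ finslerNorm V W := by
  obtain ⟨A₀, B₀, hA₀, hB₀, h₀⟩ := hW
  refine le_csInf ⟨_, A₀, B₀, hA₀, hB₀, h₀, rfl⟩ ?_
  rintro _ ⟨A, B, hA, hB, hAB, rfl⟩
  obtain ⟨A', B', hA', hB', hAB', hnA, hnB⟩ := h A B hA hB hAB
  exact (finslerNorm_le hA' hB' hAB').trans (max_le_max hnA hnB)

lemma oplusZero_tangent (V A B : E →L[ℂ] E) :
    Complex.I • (oplusZero F A * oplusZero F V) - Complex.I • (oplusZero F V * oplusZero F B) =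
      oplusZero F (Complex.I • (A * V) - Complex.I • (V * B)) := by
  simp only [map_sub, map_smul, map_mul]

lemma corner_tangent (V : E →L[ℂ] E) (A B : WithLp 2 (E × F) →L[ℂ] WithLp 2 (E × F)) :
    corner F (Complex.I • (A * oplusZero F V) - Complex.I • (oplusZero F V * B)) =
      Complex.I • (corner F A * V) - Complex.I • (V * corner F B) := by
  simp only [map_sub, map_smul, corner_mul_oplusZero, corner_oplusZero_mul]

lemma finslerNorm_oplusZero {V W : E →L[ℂ] E}
    (hW : ∃ A B, IsSelfAdjoint A ∧ IsSelfAdjoint B ∧ Complex.I • (A * V) - Complex.I • (V * B) = W) :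
    finslerNorm (oplusZero F V) (oplusZero F W) = finslerNorm V W := by
  have hW' : ∃ A B, IsSelfAdjoint A ∧ IsSelfAdjoint B ∧
      Complex.I • (A * oplusZero F V) - Complex.I • (oplusZero F V * B) = oplusZero F W := by
    obtain ⟨A, B, hA, hB, hAB⟩ := hW
    exact ⟨oplusZero F A, oplusZero F B, hA.map _, hB.map _, by rw [oplusZero_tangent, hAB]⟩
  refine le_antisymm (finslerNorm_le_finslerNorm hW fun A B hA hB hAB => ?_)
    (finslerNorm_le_finslerNorm hW' fun A B hA hB hAB => ?_)
  · exact ⟨oplusZero F A, oplusZero F B, hA.map _, hB.map _, by rw [oplusZero_tangent, hAB],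
      norm_oplusZero_le A, norm_oplusZero_le B⟩
  · exact ⟨corner F A, corner F B, hA.corner, hB.corner,
      by rw [← corner_tangent, hAB, corner_oplusZero], norm_corner_le A, norm_corner_le B⟩

end FinslerNorm

/-- For a partial isometry `V` on `H` and a tangent vector
`𝒱 = iXV − iVY`, the operators `V⊕0` and `𝒱⊕0` on the Hilbert space `H × H`
(with the sum inner product, i.e. `WithLp 2 (H × H)`) satisfy: `V⊕0` is a partial
isometry, `𝒱⊕0` is a tangent vector at `V⊕0`, and `|𝒱⊕0|_{V⊕0} = |𝒱|_V`. -/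
theorem finslerNorm_oplus_zero
    (V X Y : H →L[ℂ] H) (hV : V * star V * V = V)
    (hX : IsSelfAdjoint X) (hY : IsSelfAdjoint Y)
    (𝒱 : H →L[ℂ] H) (h𝒱 : 𝒱 = Complex.I • (X * V) - Complex.I • (V * Y))
    (Vo 𝒱o : WithLp 2 (H × H) →L[ℂ] WithLp 2 (H × H))
    (hVo : ∀ ξ η : H, Vo ((WithLp.equiv 2 (H × H)).symm (ξ, η)) =
      (WithLp.equiv 2 (H × H)).symm (V ξ, 0))
    (h𝒱o : ∀ ξ η : H, 𝒱o ((WithLp.equiv 2 (H × H)).symm (ξ, η)) =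
      (WithLp.equiv 2 (H × H)).symm (𝒱 ξ, 0)) :
    Vo * star Vo * Vo = Vo ∧
    (∃ Xbig Ybig : WithLp 2 (H × H) →L[ℂ] WithLp 2 (H × H), IsSelfAdjoint Xbig ∧ IsSelfAdjoint Ybig ∧
      𝒱o = Complex.I • (Xbig * Vo) - Complex.I • (Vo * Ybig)) ∧
    finslerNorm Vo 𝒱o = finslerNorm V 𝒱 := by
  obtain rfl : Vo = oplusZero H V := ext fun x => hVo x.fst x.snd
  obtain rfl : 𝒱o = oplusZero H 𝒱 := ext fun x => h𝒱o x.fst x.snd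
  refine ⟨by rw [← map_star, ← map_mul, ← map_mul, hV], ?_, finslerNorm_oplusZero ⟨X, Y, hX, hY, h𝒱.symm⟩⟩
  exact ⟨oplusZero H X, oplusZero H Y, hX.map _, hY.map _, by rw [oplusZero_tangent, h𝒱]⟩
end

section
/- Let V be a partial isometry on a complex Hilbert space H. Then the following are equivalent: (i) there exist unitaries U, W ∈ B(H) and an orthogonal projection P ∈ B(H) such that V = U P W*; (ii) V is balanced, i.e. there exists a ℂ-linear isometric isomorphism between the kernel of V and the orthogonal complement of the range of V (note that the range of a partial isometry is closed). -/
variable {H : Type*} [NormedAddCommGroup H] [InnerProductSpace ℂ H] [CompleteSpace H]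

/-!
If `V = U P W*`, then `W*` carries `ker V` onto `ker P` and `U*` carries `ker V* = (ran V)ᗮ` onto
`ker P* = ker P`, so `U W*` is an isometry of `ker V` onto `(ran V)ᗮ`.

Conversely, for a partial isometry `V` the operators `V* V` and `V V*` are the orthogonal
projections onto `(ker V)ᗮ` and `(ker V*)ᗮ`. An isometry `e` of `ker V` onto `ker V* = (ran V)ᗮ`,
extended by zero on `(ker V)ᗮ`, is a partial isometry `J` with `J* J = 1 - V* V`,
`J J* = 1 - V V*` and `V* J = J V* = 0`, so `V + J` is unitary and `V = (V + J) (V* V) 1*`.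
-/

open ContinuousLinearMap Submodule

abbrev IsPartialIsometry {R : Type*} [Mul R] [Star R] (v : R) : Prop :=
  v * star v * v = v

namespace IsPartialIsometry

variable {R : Type*} [Semigroup R] [StarMul R] {v : R}

protected theorem star (h : IsPartialIsometry v) : IsPartialIsometry (star v) := by
  simpa only [IsPartialIsometry, star_mul, star_star, mul_assoc] using congrArg star h

theorem star_mul_self_mul_star (h : IsPartialIsometry v) : star v * v * star v = star v := by
  simpa only [IsPartialIsometry, star_star] using h.star

theorem isStarProjection_star_mul_self (h : IsPartialIsometry v) :
    IsStarProjection (star v * v) where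
  isIdempotentElem := by rw [IsIdempotentElem, mul_assoc, ← mul_assoc v, h]
  isSelfAdjoint := .star_mul_self v

end IsPartialIsometry

variable {𝕜 E : Type*} [RCLike 𝕜] [NormedAddCommGroup E] [InnerProductSpace 𝕜 E]

namespace LinearIsometryEquiv

variable {K N : Submodule 𝕜 E}

noncomputable def extendByZero [K.HasOrthogonalProjection] (e : K ≃ₗᵢ[𝕜] N) : E →L[𝕜] E :=
  N.subtypeL ∘L (e : K →L[𝕜] N) ∘L K.orthogonalProjectionOnto

theorem starProjection_mul_extendByZero [K.HasOrthogonalProjection] [N.HasOrthogonalProjection]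
    (e : K ≃ₗᵢ[𝕜] N) : N.starProjection * e.extendByZero = e.extendByZero := by
  ext x
  simp [extendByZero]

theorem extendByZero_mul_starProjection [K.HasOrthogonalProjection] (e : K ≃ₗᵢ[𝕜] N) :
    e.extendByZero * K.starProjection = e.extendByZero := by
  ext x
  simp [extendByZero, orthogonalProjectionOnto_starProjection_of_le le_rfl]

variable [CompleteSpace E] [CompleteSpace K] [CompleteSpace N] (e : K ≃ₗᵢ[𝕜] N)

theorem star_extendByZero : star e.extendByZero = e.symm.extendByZero := by
  simp only [extendByZero, star_eq_adjoint, adjoint_comp, adjoint_subtypeL,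
    adjoint_orthogonalProjectionOnto, adjoint_eq_symm, comp_assoc]

theorem star_extendByZero_mul_self : star e.extendByZero * e.extendByZero = K.starProjection := by
  ext x
  rw [star_extendByZero]
  simp [extendByZero]

theorem extendByZero_mul_star_self : e.extendByZero * star e.extendByZero = N.starProjection := by
  ext x
  rw [star_extendByZero]
  simp [extendByZero]

end LinearIsometryEquiv

variable [CompleteSpace E]

theorem nonempty_ker_unitary_mul_mul_star_unitary {U W : E →L[𝕜] E}
    (hU : U ∈ unitary (E →L[𝕜] E)) (hW : W ∈ unitary (E →L[𝕜] E)) (A : E →L[𝕜] E) :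
    Nonempty (LinearMap.ker ((U * A * star W : E →L[𝕜] E) : E →ₗ[𝕜] E) ≃ₗᵢ[𝕜]
      LinearMap.ker (A : E →ₗ[𝕜] E)) := by
  set w := Unitary.linearIsometryEquiv ⟨W, hW⟩
  refine ⟨(LinearIsometryEquiv.ofEq _ _ ?_).trans
    (LinearIsometryEquiv.submoduleMap (LinearMap.ker (A : E →ₗ[𝕜] E)) w).symm⟩
  ext x
  have hU_inj : Function.Injective U := (Unitary.linearIsometryEquiv ⟨U, hU⟩).injective
  simp only [toLinearMap_mul, LinearMap.mem_ker, Module.End.mul_apply, coe_coe,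
    map_eq_zero_iff U hU_inj, mem_map_equiv, ContinuousLinearEquiv.coe_symm_toLinearEquiv,
    LinearIsometryEquiv.coe_symm_toContinuousLinearEquiv]
  exact Iff.rfl

namespace IsPartialIsometry

variable {V : E →L[𝕜] E} (hV : IsPartialIsometry V)
include hV

theorem starProjection_ker : (LinearMap.ker (V : E →ₗ[𝕜] E)).starProjection = 1 - star V * V := by
  ext x
  apply eq_starProjection_of_mem_orthogonal
  · rw [LinearMap.mem_ker, coe_coe, ← mul_apply_eq_comp, mul_sub, mul_one, ← mul_assoc, hV,
      sub_self, zero_apply]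
  · rw [sub_apply, one_apply_eq_self, sub_sub_cancel, orthogonal_ker, star_eq_adjoint]
    exact le_topologicalClosure _ ⟨V x, rfl⟩

variable
  (e : LinearMap.ker (V : E →ₗ[𝕜] E) ≃ₗᵢ[𝕜] LinearMap.ker ((star V : E →L[𝕜] E) : E →ₗ[𝕜] E))

theorem star_mul_extendByZero : star V * e.extendByZero = 0 := by
  rw [← e.starProjection_mul_extendByZero, hV.star.starProjection_ker, star_star, ← mul_assoc,
    mul_sub, mul_one, ← mul_assoc, hV.star_mul_self_mul_star, sub_self, zero_mul]

theorem extendByZero_mul_star : e.extendByZero * star V = 0 := by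
  rw [← e.extendByZero_mul_starProjection, hV.starProjection_ker, mul_assoc, sub_mul, one_mul,
    hV.star_mul_self_mul_star, sub_self, mul_zero]

theorem add_extendByZero_mem_unitary : V + e.extendByZero ∈ unitary (E →L[𝕜] E) := by
  have hJV : star e.extendByZero * V = 0 := by
    simpa only [star_mul, star_star, star_zero] using congrArg star (hV.star_mul_extendByZero e)
  have hVJ : V * star e.extendByZero = 0 := by
    simpa only [star_mul, star_star, star_zero] using congrArg star (hV.extendByZero_mul_star e)
  rw [Unitary.mem_iff, star_add]
  constructor
  · rw [add_mul, mul_add, mul_add, e.star_extendByZero_mul_self, hV.starProjection_ker,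
      hV.star_mul_extendByZero, hJV]
    abel
  · rw [add_mul, mul_add, mul_add, e.extendByZero_mul_star_self, hV.star.starProjection_ker,
      star_star, hVJ, hV.extendByZero_mul_star]
    abel

theorem add_extendByZero_mul_star_mul_self : (V + e.extendByZero) * (star V * V) = V := by
  rw [add_mul, ← mul_assoc, ← mul_assoc, hV, hV.extendByZero_mul_star, zero_mul, add_zero]

end IsPartialIsometry

/-- A partial isometry `V` can be written as `V = U P W*` with `U`, `W`
unitary and `P` an orthogonal projection if and only if `V` is balanced, i.e. the kernel
of `V` and the orthogonal complement of its range are isometrically isomorphic. -/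
theorem balanced_iff_kernel_isometric_range_compl
    (V : H →L[ℂ] H) (hV : V * star V * V = V) :
    (∃ U W P : H →L[ℂ] H, U ∈ unitary (H →L[ℂ] H) ∧ W ∈ unitary (H →L[ℂ] H) ∧
      IsSelfAdjoint P ∧ P * P = P ∧ V = U * P * star W) ↔
    Nonempty ((LinearMap.ker (V : H →ₗ[ℂ] H)) ≃ₗᵢ[ℂ] ((LinearMap.range (V : H →ₗ[ℂ] H))ᗮ)) := by
  rw [orthogonal_range, ← star_eq_adjoint]
  constructor
  · rintro ⟨U, W, P, hU, hW, hP, -, rfl⟩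
    have hstar : star (U * P * star W) = W * P * star U := by
      rw [star_mul, star_mul, star_star, hP.star_eq, mul_assoc]
    obtain ⟨e₁⟩ := nonempty_ker_unitary_mul_mul_star_unitary hU hW P
    obtain ⟨e₂⟩ := nonempty_ker_unitary_mul_mul_star_unitary hW hU P
    exact ⟨e₁.trans (e₂.symm.trans (LinearIsometryEquiv.ofEq _ _ (by rw [hstar])))⟩
  · rintro ⟨e⟩
    have hV : IsPartialIsometry V := hV
    have hQ := hV.isStarProjection_star_mul_self
    exact ⟨V + e.extendByZero, 1, star V * V, hV.add_extendByZero_mem_unitary e, one_mem _,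
      hQ.isSelfAdjoint, hQ.isIdempotentElem, by rw [star_one, mul_one,
      hV.add_extendByZero_mul_star_mul_self]⟩
end
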